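/- arXiv:2409.18845 — 2 statements merged into one kernel-verified Lean document; each statement's English description precedes it below -/
import Mathlib

section
/- Let R be an integral domain with fraction field K such that K is not algebraically closed. Then for any finite list of polynomials P_1,...,P_n in R[x_1,...,x_k], there exists a single polynomial Q in R[x_1,...,x_k] such that for all points a in R^k, P_1(a) = ... = P_n(a) = 0 if and only if Q(a) = 0. -/
/-!
If `p ∈ R[X]` has positive degree `d` and no root in `K`, its homogenization
`F(u, v) = v ^ d p(u / v)` vanishes on `R²` only at the origin: for `v ≠ 0` a zero would give the
root `u / v` of `p`, and `F(u, 0)` is the leading coefficient times `u ^ d`. Such an `F` merges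
two equations into one, `P₁ = P₂ = 0 ↔ F(P₁, P₂) = 0`, and iterating this merges any finite system.
-/

open Polynomial

namespace MvPolynomial

def IsAnisotropic {σ R : Type*} [CommSemiring R] (F : MvPolynomial σ R) : Prop :=
  ∀ x : σ → R, eval x F = 0 ↔ x = 0

variable {σ τ R : Type*} [CommRing R]

theorem IsAnisotropic.of_map {S : Type*} [CommRing S] {f : R →+* S} (hf : Function.Injective f)
    {F : MvPolynomial σ R} (hF : (F.map f).IsAnisotropic) : F.IsAnisotropic := by
  intro x
  rw [← map_eq_zero_iff f hf, eval₂_comp, ← eval_map, hF, ← hf.comp_left.eq_iff, Pi.comp_zero,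
    map_zero]
  rfl

theorem eval_bind₁ (a : σ → R) (g : τ → MvPolynomial σ R) (F : MvPolynomial τ R) :
    eval a (bind₁ g F) = eval (fun i => eval a (g i)) F :=
  eval₂Hom_bind₁ _ _ _ _

theorem IsAnisotropic.exists_eval_eq_zero_iff_forall {F : MvPolynomial (Fin 2) R}
    (hF : F.IsAnisotropic) {n : ℕ} (P : Fin n → MvPolynomial σ R) :
    ∃ Q : MvPolynomial σ R, ∀ a : σ → R, (∀ i, eval a (P i) = 0) ↔ eval a Q = 0 := by
  induction n with
  | zero => exact ⟨0, fun a => iff_of_true finZeroElim (map_zero _)⟩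
  | succ n ih =>
    obtain ⟨Q, hQ⟩ := ih (Fin.tail P)
    refine ⟨bind₁ ![P 0, Q] F, fun a => ?_⟩
    rw [Fin.forall_fin_succ, eval_bind₁, hF, _root_.funext_iff, Fin.forall_fin_two]
    exact and_congr Iff.rfl (hQ a)

end MvPolynomial

namespace Polynomial

theorem eval_homogenize_of_eq_zero {R : Type*} [CommSemiring R] (p : R[X]) (n : ℕ)
    {x : Fin 2 → R} (hx : x 1 = 0) :
    MvPolynomial.eval x (p.homogenize n) = p.coeff n * x 0 ^ n := by
  rw [homogenize, map_sum, Finset.sum_eq_single (n, 0)]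
  · simp [MvPolynomial.eval_monomial]
  · rintro ⟨k, l⟩ hkl hne
    have hl : l ≠ 0 := by rintro rfl; simp_all
    simp [MvPolynomial.eval_monomial, hx, hl]
  · simp

theorem isAnisotropic_homogenize {K : Type*} [Field K] {p : K[X]} (hp : 0 < p.natDegree)
    (hroot : ∀ x, ¬ p.IsRoot x) : (p.homogenize p.natDegree).IsAnisotropic := by
  intro x
  refine ⟨fun h => ?_, ?_⟩
  · by_cases hx1 : x 1 = 0
    · rw [eval_homogenize_of_eq_zero _ _ hx1, coeff_natDegree, mul_eq_zero,
        leadingCoeff_eq_zero, pow_eq_zero_iff hp.ne'] at h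
      have hx0 : x 0 = 0 := h.resolve_left (ne_zero_of_natDegree_gt hp)
      ext i
      fin_cases i <;> assumption
    · rw [eval_homogenize le_rfl x hx1, mul_eq_zero] at h
      exact (hroot _ (h.resolve_right (pow_ne_zero _ hx1))).elim
  · rintro rfl
    rw [eval_homogenize_of_eq_zero _ _ rfl, Pi.zero_apply, zero_pow hp.ne', mul_zero]

theorem isAnisotropic_homogenize_of_map {R K : Type*} [CommRing R] [Field K] {f : R →+* K}
    (hf : Function.Injective f) {q : R[X]} (hq : 0 < q.natDegree)
    (hroot : ∀ x, ¬ (q.map f).IsRoot x) : (q.homogenize q.natDegree).IsAnisotropic := by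
  rw [← natDegree_map_eq_of_injective hf] at hq
  refine .of_map hf ?_
  rw [← homogenize_map, ← natDegree_map_eq_of_injective hf]
  exact isAnisotropic_homogenize hq hroot

end Polynomial

theorem IsFractionRing.exists_natDegree_pos_forall_not_isRoot_map {R K : Type*} [CommRing R]
    [IsDomain R] [Field K] [Algebra R K] [IsFractionRing R K] (hK : ¬ IsAlgClosed K) :
    ∃ q : R[X], 0 < q.natDegree ∧ ∀ x : K, ¬ (q.map (algebraMap R K)).IsRoot x := by
  obtain ⟨p, -, hirr, hroot⟩ : ∃ p : K[X], p.Monic ∧ Irreducible p ∧ ∀ x, p.eval x ≠ 0 := by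
    by_contra! h
    exact hK (IsAlgClosed.of_exists_root K h)
  obtain ⟨b, hb, hqp⟩ := IsLocalization.integerNormalization_spec (nonZeroDivisors R) p
  have hb0 : algebraMap R K b ≠ 0 := IsFractionRing.to_map_ne_zero_of_mem_nonZeroDivisors hb
  rw [← algebraMap_smul K b p, smul_eq_C_mul] at hqp
  refine ⟨IsLocalization.integerNormalization (nonZeroDivisors R) p, ?_, fun x => ?_⟩
  · rw [← natDegree_map_eq_of_injective (IsFractionRing.injective R K), hqp, natDegree_C_mul hb0]
    exact hirr.natDegree_pos
  · rw [hqp, IsRoot, eval_mul, eval_C, mul_eq_zero, not_or]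
    exact ⟨hb0, hroot x⟩

theorem frac_not_algClosed_system_to_single {R : Type*} [CommRing R] [IsDomain R]
    (hK : ¬ IsAlgClosed (FractionRing R))
    (k n : ℕ) (P : Fin n → MvPolynomial (Fin k) R) :
    ∃ Q : MvPolynomial (Fin k) R,
      ∀ a : Fin k → R, (∀ i, MvPolynomial.eval a (P i) = 0) ↔ MvPolynomial.eval a Q = 0 := by
  obtain ⟨q, hq, hroot⟩ := IsFractionRing.exists_natDegree_pos_forall_not_isRoot_map (R := R) hK
  have hF := isAnisotropic_homogenize_of_map (IsFractionRing.injective R _) hq hroot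
  exact hF.exists_eval_eq_zero_iff_forall P
end

section
/- There exists a surjective function g : N → N that preserves computable enumerability (the image of every c.e. subset of N under g is c.e.) but is not computable. -/
/-!
Take a computable injection `h` with non-computable range (`haltingEnum`) and let
`g = succPartialInv h` send `h m` to `m + 1` and everything outside `range h` to `0`. Since
`g n = 0` exactly when `n ∉ range h`, `g` is not computable. On the other hand `g '' A` is the
preimage of `A` under the computable map `0 ↦ n₀`, `m + 1 ↦ h m`, for a suitable `n₀ ∉ range h`,
so it is c.e. whenever `A` is.
-/

open Function Set Nat.Partrec Nat.Partrec.Code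

theorem ne_univ_of_not_computablePred {α : Type*} [Primcodable α] {s : Set α}
    (hs : ¬ComputablePred (· ∈ s)) : s ≠ univ := by
  rintro rfl
  exact hs ((Computable.const true).computablePred (p := fun _ => True))

section SuccPartialInv

variable {h : ℕ → ℕ}

noncomputable def succPartialInv (h : ℕ → ℕ) (n : ℕ) : ℕ := (partialInv h n).elim 0 (· + 1)

theorem succPartialInv_eq_succ_iff (hinj : Injective h) {n m : ℕ} :
    succPartialInv h n = m + 1 ↔ h m = n := by
  rw [← hinj.isPartialInv m n, succPartialInv]
  cases partialInv h n <;> simp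

theorem succPartialInv_eq_zero_iff {n : ℕ} : succPartialInv h n = 0 ↔ n ∉ range h := by
  unfold succPartialInv partialInv
  split_ifs with hn <;> simpa using hn

theorem surjective_succPartialInv (hinj : Injective h) (hh : range h ≠ univ) :
    Surjective (succPartialInv h) := by
  rintro (_ | m)
  · obtain ⟨n, hn⟩ := (ne_univ_iff_exists_notMem _).1 hh
    exact ⟨n, succPartialInv_eq_zero_iff.2 hn⟩
  · exact ⟨h m, (succPartialInv_eq_succ_iff hinj).2 rfl⟩

theorem not_computable_succPartialInv (hh : ¬ComputablePred (· ∈ range h)) :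
    ¬Computable (succPartialInv h) := fun hc =>
  hh <| (Primrec.eq.decide.to_comp.comp hc (Computable.const 0)).computablePred.not.of_eq
    fun n => by rw [succPartialInv_eq_zero_iff, not_not]

/-- Every fibre of `succPartialInv h` over a positive value is a singleton, so only the fibre over
`0` needs a choice: take its point in `A` if there is one. -/
theorem exists_image_succPartialInv_eq_preimage (hinj : Injective h) (hh : range h ≠ univ)
    (A : Set ℕ) :
    ∃ n₀, succPartialInv h '' A = (fun x => if x = 0 then n₀ else h (x - 1)) ⁻¹' A := by
  obtain ⟨n₀, hn₀, hA₀⟩ : ∃ n₀ ∉ range h, (∃ n ∈ A, n ∉ range h) → n₀ ∈ A := by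
    by_cases hA : ∃ n ∈ A, n ∉ range h
    · obtain ⟨n, hnA, hn⟩ := hA
      exact ⟨n, hn, fun _ => hnA⟩
    · obtain ⟨n, hn⟩ := (ne_univ_iff_exists_notMem _).1 hh
      exact ⟨n, hn, fun h' => absurd h' hA⟩
  refine ⟨n₀, ext fun x => ?_⟩
  rcases x with _ | m
  · simp only [mem_image, mem_preimage, succPartialInv_eq_zero_iff]
    exact ⟨hA₀, fun h₀ => ⟨n₀, h₀, hn₀⟩⟩
  · simp [succPartialInv_eq_succ_iff hinj]

theorem rePred_image_succPartialInv (hinj : Injective h) (hc : Computable h) (hh : range h ≠ univ)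
    {A : Set ℕ} (hA : REPred (· ∈ A)) : REPred (· ∈ succPartialInv h '' A) := by
  obtain ⟨n₀, hn₀⟩ := exists_image_succPartialInv_eq_preimage hinj hh A
  have hk : Computable fun x => if x = 0 then n₀ else h (x - 1) :=
    ComputablePred.ite (Computable.const n₀) (hc.comp Primrec.pred.to_comp)
      (Primrec.eq.comp Primrec.id (Primrec.const 0)).computablePred
  rw [hn₀]
  exact Partrec.comp hA hk

end SuccPartialInv

def haltsExactlyAt (c : Code) (n s : ℕ) : Bool :=
  (evaln (s + 1) c n).isSome && !(evaln s c n).isSome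

theorem haltsExactlyAt_unique {c : Code} {n s t : ℕ} (hs : haltsExactlyAt c n s)
    (ht : haltsExactlyAt c n t) : s = t := by
  have le_of_halts {s t : ℕ} (hs : haltsExactlyAt c n s) (ht : haltsExactlyAt c n t) :
      s ≤ t := by
    by_contra! hlt
    simp only [haltsExactlyAt, Bool.and_eq_true, Bool.not_eq_true', Option.isSome_iff_exists]
      at hs ht
    obtain ⟨⟨x, hx⟩, -⟩ := ht
    rw [show evaln s c n = some x from evaln_mono hlt hx] at hs
    simp at hs
  exact le_antisymm (le_of_halts hs ht) (le_of_halts ht hs)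

theorem exists_haltsExactlyAt_iff {c : Code} {n : ℕ} :
    (∃ s, haltsExactlyAt c n s) ↔ (eval c n).Dom := by
  constructor
  · rintro ⟨s, hs⟩
    simp only [haltsExactlyAt, Bool.and_eq_true, Option.isSome_iff_exists] at hs
    obtain ⟨⟨x, hx⟩, -⟩ := hs
    exact Part.dom_iff_mem.2 ⟨x, evaln_sound hx⟩
  · intro hdom
    obtain ⟨k, hk⟩ := evaln_complete.1 (Part.get_mem hdom)
    have hex : ∃ k, (evaln k c n).isSome := ⟨k, Option.isSome_iff_exists.2 ⟨_, hk⟩⟩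
    obtain ⟨s, hs⟩ : ∃ s, Nat.find hex = s + 1 :=
      Nat.exists_eq_succ_of_ne_zero fun h0 => by simpa [h0, evaln] using Nat.find_spec hex
    obtain ⟨halts, hmin⟩ := (Nat.find_eq_iff hex).1 hs
    exact ⟨s, by simpa [haltsExactlyAt, halts] using hmin s s.lt_succ_self⟩

/-- The odd values `2 * c + 1` list the codes `c` halting on `0`, each once, at its unique halting
stage; the even values only make the enumeration total and injective. -/
def haltingEnum (m : ℕ) : ℕ :=
  bif haltsExactlyAt (Denumerable.ofNat Code m.unpair.1) 0 m.unpair.2 then 2 * m.unpair.1 + 1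
  else 2 * m

theorem haltingEnum_primrec : Primrec haltingEnum := by
  have hc : Primrec fun m : ℕ => Denumerable.ofNat Code m.unpair.1 :=
    (Primrec.ofNat Code).comp (Primrec.fst.comp Primrec.unpair)
  have hs : Primrec fun m : ℕ => m.unpair.2 := Primrec.snd.comp Primrec.unpair
  have hevaln {f : ℕ → ℕ} (hf : Primrec f) :
      Primrec fun m : ℕ => (evaln (f m) (Denumerable.ofNat Code m.unpair.1) 0).isSome :=
    Primrec.option_isSome.comp (primrec_evaln.comp ((hf.pair hc).pair (Primrec.const 0)))
  refine Primrec.cond (Primrec.and.comp (hevaln (Primrec.succ.comp hs))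
    (Primrec.not.comp (hevaln hs))) ?_ ?_
  · exact Primrec.succ.comp
      (Primrec.nat_mul.comp (Primrec.const 2) (Primrec.fst.comp Primrec.unpair))
  · exact Primrec.nat_mul.comp (Primrec.const 2) Primrec.id

theorem haltingEnum_injective : Injective haltingEnum := by
  intro a b hab
  unfold haltingEnum at hab
  cases ha : haltsExactlyAt (Denumerable.ofNat Code a.unpair.1) 0 a.unpair.2 <;>
    cases hb : haltsExactlyAt (Denumerable.ofNat Code b.unpair.1) 0 b.unpair.2 <;>
    simp only [ha, hb, cond_true, cond_false] at hab <;> try omega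
  have hcode : a.unpair.1 = b.unpair.1 := by omega
  rw [hcode] at ha
  rw [← Nat.pair_unpair a, ← Nat.pair_unpair b, hcode, haltsExactlyAt_unique ha hb]

theorem odd_mem_range_haltingEnum_iff (c : Code) :
    2 * Encodable.encode c + 1 ∈ range haltingEnum ↔ (eval c 0).Dom := by
  rw [← exists_haltsExactlyAt_iff]
  constructor
  · rintro ⟨m, hm⟩
    unfold haltingEnum at hm
    cases hhalts : haltsExactlyAt (Denumerable.ofNat Code m.unpair.1) 0 m.unpair.2 <;>
      simp only [hhalts, cond_true, cond_false] at hm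
    · omega
    · have hcode : m.unpair.1 = Encodable.encode c := by omega
      exact ⟨m.unpair.2, by simpa [hcode] using hhalts⟩
  · rintro ⟨s, hs⟩
    exact ⟨Nat.pair (Encodable.encode c) s, by simp [haltingEnum, hs]⟩

theorem not_computablePred_mem_range_haltingEnum : ¬ComputablePred (· ∈ range haltingEnum) := by
  intro hrange
  obtain ⟨f, hf, hfe⟩ := ComputablePred.computable_iff.1 hrange
  apply ComputablePred.halting_problem 0
  refine ComputablePred.computable_iff.2 ⟨fun c => f (2 * Encodable.encode c + 1), ?_, ?_⟩
  · exact hf.comp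
      (Primrec.succ.comp (Primrec.nat_mul.comp (Primrec.const 2) Primrec.encode)).to_comp
  · ext c
    rw [← odd_mem_range_haltingEnum_iff]
    exact iff_of_eq (congrFun hfe _)

theorem exists_rePreserving_not_computable :
    ∃ g : ℕ → ℕ, Function.Surjective g ∧
      (∀ A : Set ℕ, REPred (· ∈ A) → REPred (· ∈ g '' A)) ∧ ¬ Computable g :=
  have hrange := ne_univ_of_not_computablePred not_computablePred_mem_range_haltingEnum
  ⟨succPartialInv haltingEnum, surjective_succPartialInv haltingEnum_injective hrange,
    fun _ => rePred_image_succPartialInv haltingEnum_injective haltingEnum_primrec.to_comp hrange,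
    not_computable_succPartialInv not_computablePred_mem_range_haltingEnum⟩
end
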